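/- Let S be a semigroup satisfying conditions (A), (B), (C), and let Q be the semigroup of ~-classes of Σ. Then the set of idempotents of Q is exactly {[a,a] : a ∈ S}; that is, an element [a,b] ∈ Q satisfies [a,b][a,b] = [a,b] if and only if [a,b] = [c,c] for some c ∈ S. -/

import Mathlib

/-!
If `[a,b]` is idempotent, then `[a,b][a,b] = [xa, yb]` with `xb = ya` from (C), and
`(xa, yb) ∼ (a, b)`; cancelling with (B)(i) and (B)(ii) forces `x = y`, whence `l a = l b`,
`l x = r a`, and `xb = xa` cancels to `b = a`. Conversely `[c,c][c,c] = [xc, xc]` with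
`l x = r c`, and such a left multiple `(xc, xc)` is `∼`-equivalent to `(c, c)`.
Since the product is computed on chosen representatives, only the fact that `∼` is an
equivalence is needed, together with: a pair `∼`-equivalent to a diagonal pair is diagonal.
-/

/-- The bicyclic semigroup `𝓑` carried by `ℕ × ℕ`, an element being `(r, l)`;
`(m,n)(p,q) = (m - n + t, q - p + t)` with `t = max n p`. -/
structure Bicyclic where
  r : ℕ
  l : ℕ

instance : Mul Bicyclic :=
  ⟨fun x y => ⟨x.r + (max x.l y.r - x.l), y.l + (max x.l y.r - y.r)⟩⟩

/-- The inverse `(m,n)⁻¹ = (n,m)` in the bicyclic semigroup. -/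
def Bicyclic.inv (x : Bicyclic) : Bicyclic := ⟨x.l, x.r⟩

/-- `T` is a left I-order in the bicyclic semigroup `𝓑`. -/
def IsLeftIOrderBic (T : Set Bicyclic) : Prop :=
  ∀ q : Bicyclic, ∃ a ∈ T, ∃ b ∈ T, q = a.inv * b

/-- `r a`, the first coordinate of `φ a` in `𝓑`. -/
def rr {S : Type*} [Mul S] (φ : S →ₙ* Bicyclic) (a : S) : ℕ := (φ a).r

/-- `l a`, the second coordinate of `φ a` in `𝓑`. -/
def ll {S : Type*} [Mul S] (φ : S →ₙ* Bicyclic) (a : S) : ℕ := (φ a).l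

/-- Condition (A): the image of `φ` is a left I-order in `𝓑`. -/
def CondA {S : Type*} [Mul S] (φ : S →ₙ* Bicyclic) : Prop :=
  IsLeftIOrderBic (Set.range (⇑φ))

/-- Condition (B)(i): if `l x, l y ≥ r a` and `x * a = y * a` then `x = y`. -/
def CondBi {S : Type*} [Mul S] (φ : S →ₙ* Bicyclic) : Prop :=
  ∀ x y a : S, rr φ a ≤ ll φ x → rr φ a ≤ ll φ y → x * a = y * a → x = y

/-- Condition (B)(ii): if `r x, r y ≥ l a` and `a * x = a * y` then `x = y`. -/
def CondBii {S : Type*} [Mul S] (φ : S →ₙ* Bicyclic) : Prop :=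
  ∀ x y a : S, ll φ a ≤ rr φ x → ll φ a ≤ rr φ y → a * x = a * y → x = y

/-- Condition (C): for all `b c` there are `x y` with `x * b = y * c`,
`r x = r y`, `l x = r b - l b + max (l b) (l c)` and
`l y = r c - l c + max (l b) (l c)`. -/
def CondC {S : Type*} [Mul S] (φ : S →ₙ* Bicyclic) : Prop :=
  ∀ b c : S, ∃ x y : S, x * b = y * c ∧ rr φ x = rr φ y ∧
    ll φ x = rr φ b + (max (ll φ b) (ll φ c) - ll φ b) ∧
    ll φ y = rr φ c + (max (ll φ b) (ll φ c) - ll φ c)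

/-- `Σ = {(a,b) ∈ S × S : r a = r b}`. -/
abbrev Sig {S : Type*} [Mul S] (φ : S →ₙ* Bicyclic) : Type _ :=
  {p : S × S // rr φ p.1 = rr φ p.2}

/-- The relation `∼` on pairs: `(a,b) ∼ (c,d)` iff there are `x y` with
`x * a = y * c`, `x * b = y * d`, `l x = r a`, `l y = r c`, `r x = r y`. -/
def simP {S : Type*} [Mul S] (φ : S →ₙ* Bicyclic) (p q : S × S) : Prop :=
  ∃ x y : S, x * p.1 = y * q.1 ∧ x * p.2 = y * q.2 ∧
    ll φ x = rr φ p.1 ∧ ll φ y = rr φ q.1 ∧ rr φ x = rr φ y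

/-- The relation `∼` on `Σ`. -/
def sim {S : Type*} [Mul S] (φ : S →ₙ* Bicyclic) (p q : Sig φ) : Prop :=
  simP φ p.1 q.1

theorem rr_mul {S : Type*} [Mul S] (φ : S →ₙ* Bicyclic) (x a : S) :
    rr φ (x * a) = rr φ x + (max (ll φ x) (rr φ a) - ll φ x) := by
  simp only [rr, ll, map_mul]; rfl

theorem rr_mul_eq {S : Type*} [Mul S] (φ : S →ₙ* Bicyclic) {x a : S}
    (h : rr φ a ≤ ll φ x) : rr φ (x * a) = rr φ x := by
  have h1 := rr_mul φ x a
  have h2 : max (ll φ x) (rr φ a) = ll φ x := max_eq_left h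
  omega

theorem sig_mul_ok {S : Type*} [Mul S] (φ : S →ₙ* Bicyclic) {a b c d x y : S}
    (hab : rr φ a = rr φ b) (hcd : rr φ c = rr φ d)
    (hx : ll φ x = rr φ b + (max (ll φ b) (ll φ c) - ll φ b))
    (hy : ll φ y = rr φ c + (max (ll φ b) (ll φ c) - ll φ c))
    (hr : rr φ x = rr φ y) : rr φ (x * a) = rr φ (y * d) := by
  have h1 := rr_mul_eq φ (x := x) (a := a)
    (by have := le_max_left (ll φ b) (ll φ c); omega)
  have h2 := rr_mul_eq φ (x := y) (a := d)
    (by have := le_max_right (ll φ b) (ll φ c); omega)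
  omega

/-- The set `Q` of `∼`-classes of `Σ`. -/
def QT {S : Type*} [Mul S] (φ : S →ₙ* Bicyclic) : Type _ := Quot (sim φ)

/-- The `∼`-class `[a,b]` of an element of `Σ`. -/
def cls {S : Type*} [Mul S] (φ : S →ₙ* Bicyclic) (p : Sig φ) : QT φ :=
  Quot.mk _ p

/-- Packaging `(a, b)` with `r a = r b` as an element of `Σ`. -/
def mkSig {S : Type*} [Mul S] (φ : S →ₙ* Bicyclic) (a b : S)
    (h : rr φ a = rr φ b) : Sig φ := ⟨(a, b), h⟩

/-- A chosen witness `x` from condition (C) applied to `b, c`. -/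
noncomputable def cx {S : Type*} [Mul S] {φ : S →ₙ* Bicyclic} (hC : CondC φ)
    (b c : S) : S := (hC b c).choose

/-- A chosen witness `y` from condition (C) applied to `b, c`. -/
noncomputable def cy {S : Type*} [Mul S] {φ : S →ₙ* Bicyclic} (hC : CondC φ)
    (b c : S) : S := (hC b c).choose_spec.choose

theorem c_spec {S : Type*} [Mul S] {φ : S →ₙ* Bicyclic} (hC : CondC φ) (b c : S) :
    cx hC b c * b = cy hC b c * c ∧ rr φ (cx hC b c) = rr φ (cy hC b c) ∧
    ll φ (cx hC b c) = rr φ b + (max (ll φ b) (ll φ c) - ll φ b) ∧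
    ll φ (cy hC b c) = rr φ c + (max (ll φ b) (ll φ c) - ll φ c) :=
  (hC b c).choose_spec.choose_spec

/-- Representative-level multiplication: `(a,b) · (c,d) = (x * a, y * d)` where
`x, y` are the witnesses from condition (C) for `b, c`. -/
noncomputable def pairMul {S : Type*} [Mul S] {φ : S →ₙ* Bicyclic} (hC : CondC φ)
    (p q : Sig φ) : Sig φ :=
  ⟨(cx hC p.1.2 q.1.1 * p.1.1, cy hC p.1.2 q.1.1 * q.1.2),
    sig_mul_ok φ p.2 q.2 (c_spec hC p.1.2 q.1.1).2.2.1
      (c_spec hC p.1.2 q.1.1).2.2.2 (c_spec hC p.1.2 q.1.1).2.1⟩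

/-- The multiplication `[a,b][c,d] = [x*a, y*d]` on the set `Q` of `∼`-classes. -/
noncomputable def qmul {S : Type*} [Mul S] {φ : S →ₙ* Bicyclic} (hC : CondC φ)
    (u v : QT φ) : QT φ :=
  cls φ (pairMul hC (Quot.out u) (Quot.out v))

theorem ll_cx_self {S : Type*} [Mul S] {φ : S →ₙ* Bicyclic} (hC : CondC φ)
    (a : S) : ll φ (cx hC a a) = rr φ a := by
  have h := (c_spec hC a a).2.2.1
  have h2 : max (ll φ a) (ll φ a) = ll φ a := max_self _
  omega

/-- The embedding `θ : S → Q`, `a θ = [x, x*a]` for a chosen `x` with `l x = r a`. -/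
noncomputable def theta {S : Type*} [Mul S] {φ : S →ₙ* Bicyclic} (hC : CondC φ)
    (a : S) : QT φ :=
  cls φ ⟨(cx hC a a, cx hC a a * a), (rr_mul_eq φ (ll_cx_self hC a).ge).symm⟩

/-- The inverse `[a,b]⁻¹ = [b,a]` on `Q`. -/
noncomputable def qinv {S : Type*} [Mul S] {φ : S →ₙ* Bicyclic} (u : QT φ) :
    QT φ :=
  cls φ ⟨((Quot.out u).1.2, (Quot.out u).1.1), (Quot.out u).2.symm⟩

section

variable {S : Type*} [Mul S] {φ : S →ₙ* Bicyclic}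

theorem ll_mul (x a : S) :
    ll φ (x * a) = ll φ a + (max (ll φ x) (rr φ a) - rr φ a) := by
  simp only [rr, ll, map_mul]; rfl

theorem ll_mul_of_rr_le {x a : S} (h : rr φ a ≤ ll φ x) :
    ll φ (x * a) = ll φ a + (ll φ x - rr φ a) := by
  rw [ll_mul, max_eq_left h]

theorem simP_refl (hC : CondC φ) (p : S × S) : simP φ p p :=
  ⟨cx hC p.1 p.1, cx hC p.1 p.1, rfl, rfl, ll_cx_self hC p.1, ll_cx_self hC p.1, rfl⟩

theorem simP_symm {p q : S × S} (h : simP φ p q) : simP φ q p :=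
  let ⟨x, y, h₁, h₂, hx, hy, hr⟩ := h
  ⟨y, x, h₁.symm, h₂.symm, hy, hx, hr.symm⟩

theorem eq_of_simP_diag (hBii : CondBii φ) {a b c : S}
    (hab : rr φ a = rr φ b) (h : simP φ (a, b) (c, c)) : a = b := by
  obtain ⟨u, v, hua, hub, hlu, -, -⟩ := h
  exact hBii a b u hlu.le (hlu.trans hab).le (hua.trans hub.symm)

end

section

variable {S : Type*} [Semigroup S] {φ : S →ₙ* Bicyclic}

theorem simP_trans (hC : CondC φ) {p q s : S × S}
    (hpq : simP φ p q) (hqs : simP φ q s) : simP φ p s := by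
  obtain ⟨x, y, hx₁, hx₂, hlx, hly, hrxy⟩ := hpq
  obtain ⟨u, v, hu₁, hu₂, hlu, hlv, hruv⟩ := hqs
  obtain ⟨hwz, hrwz, hlw, hlz⟩ := c_spec hC y u
  set w := cx hC y u
  set z := cy hC y u
  have hlw' : ll φ w = rr φ x := by rw [hlw, hly, hlu, max_self]; omega
  have hlz' : ll φ z = rr φ v := by rw [hlz, hly, hlu, max_self]; omega
  have hwx := rr_mul_eq φ hlw'.ge
  have hzv := rr_mul_eq φ hlz'.ge
  refine ⟨w * x, z * v, ?_, ?_, ?_, ?_, ?_⟩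
  · rw [mul_assoc, hx₁, ← mul_assoc, hwz, mul_assoc, hu₁, mul_assoc]
  · rw [mul_assoc, hx₂, ← mul_assoc, hwz, mul_assoc, hu₂, mul_assoc]
  · rw [ll_mul_of_rr_le hlw'.ge, hlw']; omega
  · rw [ll_mul_of_rr_le hlz'.ge, hlz']; omega
  · rw [hwx, hzv, hrwz]

theorem sim_equivalence (hC : CondC φ) : Equivalence (sim φ) :=
  ⟨fun p => simP_refl hC p.1, simP_symm, simP_trans hC⟩

theorem cls_eq_cls_iff (hC : CondC φ) {p q : Sig φ} :
    cls φ p = cls φ q ↔ sim φ p q :=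
  Quot.eq.trans (sim_equivalence hC).eqvGen_iff

theorem simP_mul_left (hC : CondC φ) {x a b : S}
    (hx : ll φ x = rr φ a) : simP φ (x * a, x * b) (a, b) := by
  set u := cx hC x x
  have hlu : ll φ u = rr φ x := ll_cx_self hC x
  refine ⟨u, u * x, mul_assoc u x a |>.symm, mul_assoc u x b |>.symm, ?_, ?_, ?_⟩
  · show ll φ u = rr φ (x * a)
    rw [hlu, rr_mul_eq φ hx.ge]
  · show ll φ (u * x) = rr φ a
    rw [ll_mul_of_rr_le hlu.ge, hlu, hx]; omega
  · exact (rr_mul_eq φ hlu.ge).symm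

/-- Cancelling `a` and `b` on the right by (B)(i) gives `w * x = w * y`, then `w` cancels by
(B)(ii). -/
theorem eq_of_simP_mul_mul (hBi : CondBi φ) (hBii : CondBii φ) {x y a b : S}
    (hab : rr φ a = rr φ b) (hx : rr φ a ≤ ll φ x) (hy : rr φ b ≤ ll φ y)
    (hr : rr φ x = rr φ y) (h : simP φ (x * a, y * b) (a, b)) : x = y := by
  obtain ⟨w, z, hwa, hwb, hlw, hlz, -⟩ := h
  dsimp only at hwa hwb hlw hlz
  have hlw' : ll φ w = rr φ x := hlw.trans (rr_mul_eq φ hx)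
  have hwx : w * x = z := by
    refine hBi _ _ a ?_ hlz.ge (by rw [mul_assoc]; exact hwa)
    rw [ll_mul_of_rr_le hlw'.ge]; omega
  have hwy : w * y = z := by
    refine hBi _ _ b ?_ (by omega) (by rw [mul_assoc]; exact hwb)
    rw [ll_mul_of_rr_le (show rr φ y ≤ ll φ w by omega)]; omega
  exact hBii x y w hlw'.le (hlw'.trans hr).le (hwx.trans hwy.symm)

theorem eq_of_sim_pairMul_self (hBi : CondBi φ) (hBii : CondBii φ) (hC : CondC φ)
    {p : Sig φ} (h : sim φ (pairMul hC p p) p) : p.1.1 = p.1.2 := by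
  obtain ⟨⟨a, b⟩, hab⟩ := p
  obtain ⟨hxy, hrxy, hlx, hly⟩ := c_spec hC b a
  set x := cx hC b a
  set y := cy hC b a
  change rr φ a = rr φ b at hab
  have hmb := le_max_left (ll φ b) (ll φ a)
  have hma := le_max_right (ll φ b) (ll φ a)
  have hxy' : x = y := eq_of_simP_mul_mul hBi hBii hab (by omega) (by omega) hrxy h
  have hlxy : ll φ x = ll φ y := by rw [hxy']
  have hlx' : ll φ x = rr φ a := by omega
  exact (hBii b a x (by omega) hlx'.le (by rw [hxy, hxy'])).symm

theorem sim_pairMul_self_of_eq (hC : CondC φ) {p : Sig φ} (h : p.1.1 = p.1.2) :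
    sim φ (pairMul hC p p) p := by
  obtain ⟨⟨c, c'⟩, hc⟩ := p
  obtain rfl : c = c' := h
  show simP φ (cx hC c c * c, cy hC c c * c) (c, c)
  rw [← (c_spec hC c c).1]
  exact simP_mul_left hC (ll_cx_self hC c)

end

theorem stmt16_general {S : Type*} [Semigroup S] (φ : S →ₙ* Bicyclic)
    (hBi : CondBi φ) (hBii : CondBii φ) (hC : CondC φ) :
    ∀ p : Sig φ,
      qmul hC (cls φ p) (cls φ p) = cls φ p ↔
        ∃ c : S, cls φ p = cls φ (mkSig φ c c rfl) := by
  intro p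
  set q := Quot.out (cls φ p)
  have hqp : cls φ q = cls φ p := Quot.out_eq _
  change cls φ (pairMul hC q q) = cls φ p ↔ _
  rw [← hqp, cls_eq_cls_iff hC]
  constructor
  · intro h
    have hdiag := eq_of_sim_pairMul_self hBi hBii hC h
    exact ⟨q.1.1, congrArg (cls φ) (Subtype.ext (Prod.ext rfl hdiag.symm))⟩
  · rintro ⟨c, hc⟩
    exact sim_pairMul_self_of_eq hC (eq_of_simP_diag hBii q.2 ((cls_eq_cls_iff hC).1 hc))

/-- The idempotents of `Q` are exactly the classes `[a,a]`, `a ∈ S`. -/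
theorem stmt16 {S : Type*} [Semigroup S] (φ : S →ₙ* Bicyclic)
    (hA : CondA φ) (hBi : CondBi φ) (hBii : CondBii φ) (hC : CondC φ) :
    ∀ p : Sig φ,
      qmul hC (cls φ p) (cls φ p) = cls φ p ↔
        ∃ c : S, cls φ p = cls φ (mkSig φ c c rfl) :=
  stmt16_general φ hBi hBii hC
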